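/- Universal property: let R be a multiplicatively cancellative commutative semiring and ρ : Sub_≥(ℕ × ℕ) → R a semiring homomorphism with ρ⁻¹({0}) = {∅}. Then ρ factors uniquely through the convex hull map γ: there exists a unique semiring homomorphism ρ' : Conv_≥(ℕ × ℕ) → R with ρ = ρ' ∘ γ. In particular, ρ(E) depends only on the convex hull γ(E). -/

import Mathlib

open Pointwise

/-- The positive quadrant in ℝ². -/
def Quad : Set (ℝ × ℝ) := {p : ℝ × ℝ | 0 ≤ p.1 ∧ 0 ≤ p.2}

/-- Membership in Conv_≥(ℕ × ℕ). -/
def IsConvGE (C : Set (ℝ × ℝ)) : Prop :=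
  C = ∅ ∨ (C ⊆ Quad ∧ IsClosed C ∧ Convex ℝ C ∧ C + Quad = C ∧
    Set.extremePoints ℝ C ⊆ {p : ℝ × ℝ | ∃ a b : ℕ, p = ((a : ℝ), (b : ℝ))})

/-- The convex hull map: `gam E` is the closed convex hull of E + Q in ℝ². -/
noncomputable def gam (E : Set (ℕ × ℕ)) : Set (ℝ × ℝ) :=
  closure (convexHull ℝ ((fun p : ℕ × ℕ => ((p.1 : ℝ), (p.2 : ℝ))) '' E + Quad))

/-- `σ` is a semiring homomorphism Conv_≥(ℕ × ℕ) → R. -/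
def IsConvHom {R : Type*} [CommSemiring R] (σ : Set (ℝ × ℝ) → R) : Prop :=
  σ ∅ = 0 ∧ σ Quad = 1 ∧
  ∀ C C' : Set (ℝ × ℝ), IsConvGE C → IsConvGE C' →
    σ (closure (convexHull ℝ (C ∪ C'))) = σ C + σ C' ∧ σ (C + C') = σ C * σ C'

/-! Write `S E` for the lattice points of `gam E`. Every point of a convex hull in the plane
dominates a point of a segment between two generators; applied to the midpoint of two points
of `S E`, this gives `S E + S E = E + S E`, and cancelling `ρ (S E) ≠ 0` gives `ρ (S E) = ρ E`,
so `ρ E` only depends on `gam E`. Conversely every `C` in `Conv_≥(ℕ × ℕ)` is `gam` of its lattice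
points: a point of `C` outside would be separated by a functional with positive coefficients,
whose minimum over `C` below that point is attained at an extreme point, a lattice point.
Since `gam` turns unions and Minkowski sums into the operations of `Conv_≥(ℕ × ℕ)`,
`C ↦ ρ (latticePoints C)` is the factorisation, and it is the only one. -/

open Set

section Plane

lemma exists_relation_sum_zero_snd {t : Finset (ℝ × ℝ)} (ht : 2 < t.card) :
    ∃ f : ℝ × ℝ → ℝ, ∑ i ∈ t, f i = 0 ∧ ∑ i ∈ t, f i * i.2 = 0 ∧ ∃ i ∈ t, f i ≠ 0 := by
  have hdep : ¬ LinearIndependent ℝ (fun i : t => ((1 : ℝ), (i : ℝ × ℝ).2)) := fun h => by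
    have := h.fintype_card_le_finrank
    simp only [Fintype.card_coe, Module.finrank_prod, Module.finrank_self] at this
    omega
  obtain ⟨g, hg, i, hi⟩ := Fintype.not_linearIndependent_iff.1 hdep
  have hext : ∀ j : t, Subtype.val.extend g 0 (j : ℝ × ℝ) = g j :=
    fun j => Subtype.val_injective.extend_apply _ _ _
  have h1 := congrArg Prod.fst hg
  have h2 := congrArg Prod.snd hg
  simp only [Prod.fst_sum, Prod.snd_sum, Prod.smul_fst, Prod.smul_snd, smul_eq_mul, mul_one,
    Prod.fst_zero, Prod.snd_zero] at h1 h2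
  refine ⟨Subtype.val.extend g 0, ?_, ?_, i, i.2, by rwa [hext]⟩
  · rw [← Finset.sum_coe_sort]; simpa only [hext] using h1
  · rw [← Finset.sum_coe_sort t (fun j => Subtype.val.extend g 0 j * j.2)]
    simpa only [hext] using h2

/-- Carathéodory's reduction, moving the weights along a relation that fixes the second
coordinate and does not increase the first one, until one weight vanishes. -/
lemma exists_mem_convexHull_erase_le {t : Finset (ℝ × ℝ)} (ht : 2 < t.card) {c : ℝ × ℝ}
    (hc : c ∈ convexHull ℝ (t : Set (ℝ × ℝ))) :
    ∃ i ∈ t, ∃ c' ∈ convexHull ℝ (t.erase i : Set (ℝ × ℝ)), c' ≤ c := by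
  classical
  obtain ⟨w, hw0, hw1, rfl⟩ := Finset.mem_convexHull'.1 hc
  obtain ⟨f, hf1, hf2, hf⟩ := exists_relation_sum_zero_snd ht
  wlog hfx : 0 ≤ ∑ i ∈ t, f i * i.1 generalizing f
  · refine this (-f) (by simp [hf1]) (by simp [hf2]) (by simpa using hf) ?_
    simp only [Pi.neg_apply, neg_mul, Finset.sum_neg_distrib]
    linarith
  have hf0 : 0 ≤ ∑ i ∈ t, f i • i := by
    simpa [Prod.le_def, Prod.fst_sum, Prod.snd_sum, hf2] using hfx
  obtain ⟨i₁, hi₁, hfi₁⟩ := Finset.exists_pos_of_sum_zero_of_exists_nonzero f hf1 hf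
  obtain ⟨i₀, hi₀, hmin⟩ := (t.filter (0 < f ·)).exists_min_image (fun i => w i / f i)
    ⟨i₁, Finset.mem_filter.2 ⟨hi₁, hfi₁⟩⟩
  rw [Finset.mem_filter] at hi₀
  set s := w i₀ / f i₀
  have hs : 0 ≤ s := div_nonneg (hw0 _ hi₀.1) hi₀.2.le
  set w' : ℝ × ℝ → ℝ := fun i => w i - s * f i
  have hw'0 : ∀ i ∈ t, 0 ≤ w' i := fun i hi => by
    rcases le_or_gt (f i) 0 with hfi | hfi
    · linarith [hw0 i hi, mul_nonpos_of_nonneg_of_nonpos hs hfi]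
    · have := hmin i (Finset.mem_filter.2 ⟨hi, hfi⟩)
      rw [le_div_iff₀ hfi] at this
      linarith
  have hw'i₀ : w' i₀ = 0 := by simp [w', s, div_mul_cancel₀ _ hi₀.2.ne']
  refine ⟨i₀, hi₀.1, ∑ i ∈ t, w' i • i, Finset.mem_convexHull'.2
    ⟨w', fun i hi => hw'0 i (Finset.mem_of_mem_erase hi), ?_, Finset.sum_erase _ (by simp [hw'i₀])⟩,
    ?_⟩
  · rw [Finset.sum_erase _ hw'i₀]
    simp [w', Finset.sum_sub_distrib, ← Finset.mul_sum, hw1, hf1]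
  · simp only [w', sub_smul, Finset.sum_sub_distrib, mul_smul, ← Finset.smul_sum]
    exact sub_le_self _ (smul_nonneg hs hf0)

lemma Finset.exists_mem_segment_le_of_mem_convexHull (t : Finset (ℝ × ℝ)) {c : ℝ × ℝ}
    (hc : c ∈ convexHull ℝ (t : Set (ℝ × ℝ))) :
    ∃ a ∈ t, ∃ b ∈ t, ∃ z ∈ segment ℝ a b, z ≤ c := by
  induction t using Finset.strongInduction generalizing c with
  | H t ih =>
    by_cases ht : 2 < t.card
    · obtain ⟨i, hi, c', hc', hc'c⟩ := exists_mem_convexHull_erase_le ht hc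
      obtain ⟨a, ha, b, hb, z, hz, hzc'⟩ := ih _ (Finset.erase_ssubset hi) hc'
      exact ⟨a, Finset.mem_of_mem_erase ha, b, Finset.mem_of_mem_erase hb, z, hz, hzc'.trans hc'c⟩
    obtain h | h | h : t.card = 0 ∨ t.card = 1 ∨ t.card = 2 := by omega
    · simp [Finset.card_eq_zero.1 h] at hc
    · obtain ⟨a, rfl⟩ := Finset.card_eq_one.1 h
      rw [Finset.coe_singleton, convexHull_singleton, mem_singleton_iff] at hc
      exact ⟨a, Finset.mem_singleton_self a, a, Finset.mem_singleton_self a, c,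
        hc ▸ left_mem_segment ℝ a a, le_rfl⟩
    · obtain ⟨a, b, -, rfl⟩ := Finset.card_eq_two.1 h
      rw [Finset.coe_pair, convexHull_pair] at hc
      exact ⟨a, by simp, b, by simp, c, hc, le_rfl⟩

lemma exists_mem_segment_le_of_mem_convexHull {s : Set (ℝ × ℝ)} {c : ℝ × ℝ}
    (hc : c ∈ convexHull ℝ s) : ∃ a ∈ s, ∃ b ∈ s, ∃ z ∈ segment ℝ a b, z ≤ c := by
  rw [convexHull_eq_union_convexHull_finite_subsets, mem_iUnion₂] at hc
  obtain ⟨t, hts, hc⟩ := hc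
  obtain ⟨a, ha, b, hb, z, hz, hzc⟩ := t.exists_mem_segment_le_of_mem_convexHull hc
  exact ⟨a, hts ha, b, hts hb, z, hz, hzc⟩

end Plane

section Quadrant

lemma Quad_eq_Ici : Quad = Ici 0 := by
  ext p
  simp [Quad, Prod.le_def]

lemma mem_add_Quad {s : Set (ℝ × ℝ)} {x : ℝ × ℝ} : x ∈ s + Quad ↔ ∃ y ∈ s, y ≤ x := by
  simp only [Quad_eq_Ici, mem_add, mem_Ici]
  constructor
  · rintro ⟨y, hy, q, hq, rfl⟩
    exact ⟨y, hy, le_add_of_nonneg_right hq⟩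
  · rintro ⟨y, hy, hyx⟩
    exact ⟨y, hy, x - y, sub_nonneg.2 hyx, add_sub_cancel _ _⟩

lemma Quad_add_Quad : Quad + Quad = Quad := by
  ext x
  rw [mem_add_Quad]
  refine ⟨fun ⟨y, hy, hyx⟩ => ?_, fun hx => ⟨x, hx, le_rfl⟩⟩
  rw [Quad_eq_Ici, mem_Ici] at hy ⊢
  exact hy.trans hyx

lemma isClosed_Quad : IsClosed Quad := Quad_eq_Ici ▸ isClosed_Ici

lemma convex_Quad : Convex ℝ Quad := Quad_eq_Ici ▸ convex_Ici 0

lemma closure_convexHull_add_Quad {s : Set (ℝ × ℝ)} (hs : s.Finite) :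
    closure (convexHull ℝ (s + Quad)) = convexHull ℝ s + Quad := by
  rw [convexHull_add, convex_Quad.convexHull_eq]
  exact (isClosed_Quad.add_left_of_isCompact (hs.isCompact_convexHull ℝ)).closure_eq

lemma nonneg_of_forall_lt_add_mul {β c s : ℝ} (h : ∀ t : ℝ, 0 ≤ t → β < c + t * s) : 0 ≤ s := by
  by_contra! hs
  have hc : 0 < c - β := by linarith [h 0 le_rfl]
  have := h ((c - β) / -s) (div_nonneg hc.le (by linarith))
  rw [div_mul_eq_mul_div, div_neg, mul_div_cancel_right₀ _ hs.ne] at this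
  linarith

/-- The Hahn–Banach functional is nonnegative on the quadrant, and adding a small multiple of
`x ↦ x.1 + x.2` makes its coefficients positive without destroying the separation. -/
lemma exists_pos_separating {D : Set (ℝ × ℝ)} (hDQ : D ⊆ Quad) (hD : IsClosed D)
    (hDc : Convex ℝ D) (hDadd : D + Quad ⊆ D) {x : ℝ × ℝ} (hx : x ∉ D) :
    ∃ a b β : ℝ, 0 < a ∧ 0 < b ∧ a * x.1 + b * x.2 < β ∧ ∀ d ∈ D, β < a * d.1 + b * d.2 := by
  rcases D.eq_empty_or_nonempty with rfl | ⟨d₀, hd₀⟩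
  · exact ⟨1, 1, 1 * x.1 + 1 * x.2 + 1, one_pos, one_pos, by linarith, by simp⟩
  obtain ⟨f, β, hfx, hfD⟩ := geometric_hahn_banach_point_closed hDc hD hx
  have hf : ∀ y : ℝ × ℝ, f y = f (1, 0) * y.1 + f (0, 1) * y.2 := fun y => by
    conv_lhs => rw [show y = y.1 • ((1 : ℝ), (0 : ℝ)) + y.2 • ((0 : ℝ), (1 : ℝ)) by ext <;> simp]
    rw [map_add, map_smul, map_smul, smul_eq_mul, smul_eq_mul, mul_comm, mul_comm y.2]
  have hfQ : ∀ v ∈ Quad, 0 ≤ f v := fun v hv => by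
    refine nonneg_of_forall_lt_add_mul (β := β) (c := f d₀) fun t ht => ?_
    have htv : t • v ∈ Quad := by
      rw [Quad_eq_Ici, mem_Ici] at hv ⊢
      exact smul_nonneg ht hv
    simpa using hfD _ (hDadd (add_mem_add hd₀ htv))
  have h10 := hfQ (1, 0) ⟨zero_le_one, le_rfl⟩
  have h01 := hfQ (0, 1) ⟨le_rfl, zero_le_one⟩
  set δ := (β - f x) / (|x.1| + |x.2| + 1)
  have hδ : 0 < δ := div_pos (by linarith) (by positivity)
  have hδx : δ * (x.1 + x.2) < β - f x := by
    have : δ * (|x.1| + |x.2| + 1) = β - f x := div_mul_cancel₀ _ (by positivity)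
    have := mul_le_mul_of_nonneg_left (add_le_add (le_abs_self x.1) (le_abs_self x.2)) hδ.le
    linarith
  refine ⟨f (1, 0) + δ, f (0, 1) + δ, β, by linarith, by linarith, ?_, fun d hd => ?_⟩
  · linarith [hf x]
  · obtain ⟨hd1, hd2⟩ := hDQ hd
    linarith [hf d, hfD d hd, mul_nonneg hδ.le hd1, mul_nonneg hδ.le hd2]

lemma exists_mem_extremePoints_le {C : Set (ℝ × ℝ)} (hCQ : C ⊆ Quad) (hC : IsClosed C)
    {x : ℝ × ℝ} (hx : x ∈ C) {a b : ℝ} (ha : 0 < a) (hb : 0 < b) :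
    ∃ z ∈ extremePoints ℝ C, a * z.1 + b * z.2 ≤ a * x.1 + b * x.2 := by
  set f : ℝ × ℝ →L[ℝ] ℝ := a • ContinuousLinearMap.fst ℝ ℝ ℝ + b • ContinuousLinearMap.snd ℝ ℝ ℝ
  have hf : ∀ y, f y = a * y.1 + b * y.2 := fun _ => rfl
  set K := C ∩ {y | f y ≤ f x}
  have hK : IsCompact K := by
    refine (isCompact_Icc (a := (0 : ℝ × ℝ)) (b := (f x / a, f x / b))).of_isClosed_subset
      (hC.inter (isClosed_le f.continuous continuous_const)) ?_
    rintro y ⟨hyC, hyx : f y ≤ f x⟩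
    obtain ⟨hy1, hy2⟩ := hCQ hyC
    rw [hf] at hyx
    refine ⟨⟨hy1, hy2⟩, ?_, ?_⟩
    · rw [le_div_iff₀ ha]; linarith [mul_nonneg hb.le hy2]
    · rw [le_div_iff₀ hb]; linarith [mul_nonneg ha.le hy1]
  obtain ⟨y₀, hy₀, hmin⟩ := hK.exists_isMinOn ⟨x, hx, le_refl (f x)⟩ f.continuous.continuousOn
  set B := (-f).toExposed C
  have hB : IsExposed ℝ C B := ContinuousLinearMap.toExposed.isExposed
  have hBK : B ⊆ K := fun y hy =>
    ⟨hy.1, (neg_le_neg_iff.1 (hy.2 y₀ hy₀.1)).trans hy₀.2⟩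
  have hy₀B : y₀ ∈ B := by
    refine ⟨hy₀.1, fun y hy => neg_le_neg_iff.2 ?_⟩
    by_cases hyK : f y ≤ f x
    · exact hmin ⟨hy, hyK⟩
    · exact hy₀.2.trans (not_le.1 hyK).le
  obtain ⟨z, hz⟩ := (hK.of_isClosed_subset (hB.isClosed hC) hBK).extremePoints_nonempty ⟨y₀, hy₀B⟩
  exact ⟨z, hB.isExtreme.extremePoints_subset_extremePoints hz, (hBK hz.1).2⟩

end Quadrant

section Lattice

def toPlane : ℕ × ℕ →+ ℝ × ℝ := (Nat.castAddMonoidHom ℝ).prodMap (Nat.castAddMonoidHom ℝ)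

def latticePoints (C : Set (ℝ × ℝ)) : Set (ℕ × ℕ) := toPlane ⁻¹' C

lemma toPlane_apply (p : ℕ × ℕ) : toPlane p = ((p.1 : ℝ), (p.2 : ℝ)) := rfl

lemma gam_def (E : Set (ℕ × ℕ)) : gam E = closure (convexHull ℝ (toPlane '' E + Quad)) := rfl

lemma toPlane_le_toPlane {p q : ℕ × ℕ} : toPlane p ≤ toPlane q ↔ p ≤ q := by
  simp [toPlane, Prod.le_def]

lemma toPlane_mem_Quad (p : ℕ × ℕ) : toPlane p ∈ Quad := by
  simp [toPlane, Quad]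

lemma latticePoints_Quad : latticePoints Quad = univ :=
  eq_univ_of_forall toPlane_mem_Quad

lemma image_toPlane_add_Quad (E : Set (ℕ × ℕ)) :
    toPlane '' E + Quad = toPlane '' {x | Minimal (· ∈ E) x} + Quad := by
  ext x
  simp only [mem_add_Quad, exists_mem_image]
  constructor
  · rintro ⟨e, he, hex⟩
    obtain ⟨m, hme, hm⟩ := exists_minimal_le_of_wellFoundedLT (· ∈ E) e he
    exact ⟨m, hm, (toPlane_le_toPlane.2 hme).trans hex⟩
  · rintro ⟨m, hm, hmx⟩
    exact ⟨m, hm.prop, hmx⟩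

lemma finite_image_minimal (E : Set (ℕ × ℕ)) : (toPlane '' {x | Minimal (· ∈ E) x}).Finite :=
  (WellQuasiOrderedLE.finite_of_isAntichain (setOfPred_minimal_antichain _)).image _

lemma gam_eq_convexHull_add_Quad (E : Set (ℕ × ℕ)) :
    gam E = convexHull ℝ (toPlane '' {x | Minimal (· ∈ E) x}) + Quad := by
  rw [gam_def, image_toPlane_add_Quad, closure_convexHull_add_Quad (finite_image_minimal E)]

lemma gam_add_Quad (E : Set (ℕ × ℕ)) : gam E + Quad = gam E := by
  rw [gam_eq_convexHull_add_Quad, add_assoc, Quad_add_Quad]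

lemma convexHull_image_toPlane_subset_Quad (s : Set (ℕ × ℕ)) :
    convexHull ℝ (toPlane '' s) ⊆ Quad :=
  convexHull_min (image_subset_iff.2 fun p _ => toPlane_mem_Quad p) convex_Quad

lemma gam_subset_Quad (E : Set (ℕ × ℕ)) : gam E ⊆ Quad :=
  calc gam E = _ := gam_eq_convexHull_add_Quad E
    _ ⊆ Quad + Quad := add_subset_add_right (convexHull_image_toPlane_subset_Quad _)
    _ = Quad := Quad_add_Quad

lemma isUpperSet_latticePoints_gam (E : Set (ℕ × ℕ)) : IsUpperSet (latticePoints (gam E)) :=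
  fun p _ hpq hp =>
    gam_add_Quad E ▸ mem_add_Quad.2 ⟨toPlane p, hp, toPlane_le_toPlane.2 hpq⟩

lemma toPlane_mem_gam {E : Set (ℕ × ℕ)} {e : ℕ × ℕ} (he : e ∈ E) : toPlane e ∈ gam E :=
  subset_closure (subset_convexHull ℝ _ (mem_add_Quad.2 ⟨toPlane e, mem_image_of_mem _ he, le_rfl⟩))

lemma subset_latticePoints_gam (E : Set (ℕ × ℕ)) : E ⊆ latticePoints (gam E) :=
  fun _ => toPlane_mem_gam

lemma gam_empty : gam ∅ = ∅ := by
  simp [gam_def]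

lemma gam_union (E E' : Set (ℕ × ℕ)) :
    gam (E ∪ E') = closure (convexHull ℝ (gam E ∪ gam E')) := by
  simp only [gam_def, ← closedConvexHull_eq_closure_convexHull, image_union, union_add]
  exact ((closedConvexHull ℝ).closure_sup_closure _ _).symm

lemma gam_add (E E' : Set (ℕ × ℕ)) : gam (E + E') = gam E + gam E' := by
  have h : toPlane '' (E + E') + Quad = toPlane '' {x | Minimal (· ∈ E) x} +
      toPlane '' {x | Minimal (· ∈ E') x} + Quad := by
    rw [image_add, ← Quad_add_Quad, add_add_add_comm, image_toPlane_add_Quad E,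
      image_toPlane_add_Quad E', add_add_add_comm, Quad_add_Quad]
  rw [gam_def, h, closure_convexHull_add_Quad ((finite_image_minimal E).add (finite_image_minimal E')),
    convexHull_add, gam_eq_convexHull_add_Quad, gam_eq_convexHull_add_Quad, add_add_add_comm,
    Quad_add_Quad]

/-- The midpoint of `p` and `q` dominates a point `θ a + θ' b` of a segment between minimal
points of `E`, with `θ ≥ 1/2` after swapping; then `p + q ≥ a + ((2θ - 1) a + 2θ' b)`. -/
lemma latticePoints_gam_add_self_subset (E : Set (ℕ × ℕ)) :
    latticePoints (gam E) + latticePoints (gam E) ⊆ E + latticePoints (gam E) := by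
  set M := toPlane '' {x | Minimal (· ∈ E) x}
  rintro _ ⟨p, hp, q, hq, rfl⟩
  simp only [latticePoints, mem_preimage, gam_eq_convexHull_add_Quad, mem_add_Quad] at hp hq
  obtain ⟨cp, hcp, hcpp⟩ := hp
  obtain ⟨cq, hcq, hcqq⟩ := hq
  obtain ⟨a, ha, b, hb, _, ⟨θ, θ', hθ, hθ', hθθ', rfl⟩, hz⟩ :=
    exists_mem_segment_le_of_mem_convexHull (convex_convexHull ℝ M hcp hcq
      (by norm_num : (0 : ℝ) ≤ 1 / 2) (by norm_num : (0 : ℝ) ≤ 1 / 2) (by norm_num))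
  wlog hθ2 : 1 / 2 ≤ θ generalizing a b θ θ'
  · exact this b hb a ha θ' θ hθ' hθ (by linarith) (by rwa [add_comm]) (by linarith)
  obtain ⟨m, hm, rfl⟩ := ha
  set k := (2 * θ - 1) • toPlane m + (2 * θ') • b
  have hk : k ∈ convexHull ℝ M := convex_convexHull ℝ M
    (subset_convexHull ℝ M (mem_image_of_mem _ hm)) (subset_convexHull ℝ M hb)
    (by linarith) (by linarith) (by linarith)
  have hle : toPlane m + k ≤ toPlane (p + q) :=
    calc toPlane m + k = (2 : ℝ) • (θ • toPlane m + θ' • b) := by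
          simp only [k]; module
      _ ≤ (2 : ℝ) • ((1 / 2 : ℝ) • cp + (1 / 2 : ℝ) • cq) :=
          smul_le_smul_of_nonneg_left hz (by norm_num)
      _ = cp + cq := by module
      _ ≤ toPlane p + toPlane q := add_le_add hcpp hcqq
      _ = toPlane (p + q) := (map_add toPlane p q).symm
  have hk0 : 0 ≤ k := by
    have := convexHull_image_toPlane_subset_Quad _ hk
    rwa [Quad_eq_Ici] at this
  have hmpq : m ≤ p + q := toPlane_le_toPlane.1 ((le_add_of_nonneg_right hk0).trans hle)
  refine ⟨m, hm.prop, p + q - m, ?_, add_tsub_cancel_of_le hmpq⟩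
  simp only [latticePoints, mem_preimage, gam_eq_convexHull_add_Quad, mem_add_Quad]
  refine ⟨k, hk, ?_⟩
  rwa [← add_le_add_iff_left (toPlane m), ← map_add, add_tsub_cancel_of_le hmpq]

lemma gam_latticePoints_of_isConvGE {C : Set (ℝ × ℝ)} (hC : IsConvGE C) :
    gam (latticePoints C) = C := by
  rcases hC with rfl | ⟨hCQ, hCcl, hCcv, hCadd, hCext⟩
  · simp [latticePoints, gam_empty]
  have hsub : gam (latticePoints C) ⊆ C := by
    refine closure_minimal (convexHull_min ?_ hCcv) hCcl
    calc toPlane '' latticePoints C + Quad ⊆ C + Quad :=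
          add_subset_add_right (image_preimage_subset _ _)
      _ = C := hCadd
  refine hsub.antisymm fun x hx => ?_
  by_contra hxD
  obtain ⟨a, b, β, ha, hb, hxβ, hβD⟩ := exists_pos_separating (gam_subset_Quad _)
    isClosed_closure (convex_convexHull ℝ _).closure (gam_add_Quad _).le hxD
  obtain ⟨z, hz, hzx⟩ := exists_mem_extremePoints_le hCQ hCcl hx ha hb
  obtain ⟨n₁, n₂, rfl⟩ := hCext hz
  have := hβD _ (toPlane_mem_gam (show (n₁, n₂) ∈ latticePoints C from hz.1))
  rw [toPlane_apply] at this
  linarith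

end Lattice

lemma IsUpperSet.add_of_canonicallyOrderedAdd {α : Type*} [AddCommMonoid α] [PartialOrder α]
    [CanonicallyOrderedAdd α] {s t : Set α} (ht : IsUpperSet t) : IsUpperSet (s + t) := by
  rintro _ b hab ⟨e, he, f, hf, rfl⟩
  obtain ⟨d, rfl⟩ := exists_add_of_le hab
  exact ⟨e, he, f + d, ht le_self_add hf, (add_assoc _ _ _).symm⟩

lemma map_latticePoints_gam {R : Type*} [Mul R] [Zero R] [IsLeftCancelMulZero R]
    {ρ : Set (ℕ × ℕ) → R}
    (hmul : ∀ E E' : Set (ℕ × ℕ), IsUpperSet E → IsUpperSet E' → ρ (E + E') = ρ E * ρ E')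
    (hker : ∀ E : Set (ℕ × ℕ), IsUpperSet E → ρ E = 0 → E = ∅)
    {E : Set (ℕ × ℕ)} (hE : IsUpperSet E) : ρ (latticePoints (gam E)) = ρ E := by
  set S := latticePoints (gam E)
  have hS := isUpperSet_latticePoints_gam E
  rcases E.eq_empty_or_nonempty with rfl | hne
  · simp [S, latticePoints, gam_empty]
  have hS0 : ρ S ≠ 0 := fun h => (hne.mono (subset_latticePoints_gam E)).ne_empty (hker S hS h)
  have hSS : S + S = S + E := by
    rw [add_comm S E]
    exact (latticePoints_gam_add_self_subset E).antisymm
      (add_subset_add_right (subset_latticePoints_gam E))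
  exact mul_left_cancel₀ hS0 (by rw [← hmul S S hS hS, hSS, hmul S E hS hE])

/-- Universal property of the reduced square: a semiring homomorphism ρ from the upper
sets of ℕ × ℕ (union, Minkowski sum) to a multiplicatively cancellative commutative
semiring R with ρ⁻¹({0}) = {∅} factors uniquely through the convex hull map γ; in
particular ρ(E) only depends on γ(E). -/
theorem stmt14 {R : Type*} [CommSemiring R]
    (hcanc : ∀ x y z : R, x ≠ 0 → x * y = x * z → y = z)
    (ρ : Set (ℕ × ℕ) → R)
    (hadd : ∀ E E' : Set (ℕ × ℕ), IsUpperSet E → IsUpperSet E' →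
      ρ (E ∪ E') = ρ E + ρ E' ∧ ρ (E + E') = ρ E * ρ E')
    (h0 : ρ ∅ = 0) (h1 : ρ Set.univ = 1)
    (hker : ∀ E : Set (ℕ × ℕ), IsUpperSet E → (ρ E = 0 ↔ E = ∅)) :
    (∀ E E' : Set (ℕ × ℕ), IsUpperSet E → IsUpperSet E' → gam E = gam E' → ρ E = ρ E') ∧
    ∃ ρ' : Set (ℝ × ℝ) → R, IsConvHom ρ' ∧
      (∀ E : Set (ℕ × ℕ), IsUpperSet E → ρ' (gam E) = ρ E) ∧
      ∀ σ : Set (ℝ × ℝ) → R, IsConvHom σ →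
        (∀ E : Set (ℕ × ℕ), IsUpperSet E → σ (gam E) = ρ E) →
        ∀ C : Set (ℝ × ℝ), IsConvGE C → σ C = ρ' C := by
  have : IsLeftCancelMulZero R := ⟨fun ha _ _ h => hcanc _ _ _ ha h⟩
  have hsat : ∀ E, IsUpperSet E → ρ (latticePoints (gam E)) = ρ E := fun _ =>
    map_latticePoints_gam (fun E E' hE hE' => (hadd E E' hE hE').2) (fun E hE => (hker E hE).1)
  have hconv : ∀ C, IsConvGE C → IsUpperSet (latticePoints C) ∧ gam (latticePoints C) = C :=
    fun C hC => ⟨gam_latticePoints_of_isConvGE hC ▸ isUpperSet_latticePoints_gam _,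
      gam_latticePoints_of_isConvGE hC⟩
  refine ⟨fun E E' hE hE' h => by rw [← hsat E hE, h, hsat E' hE'],
    fun C => ρ (latticePoints C), ⟨by simpa [latticePoints] using h0,
    by simpa [latticePoints_Quad] using h1, fun C C' hC hC' => ?_⟩, hsat, fun σ _ hσ C hC => ?_⟩
  · obtain ⟨hE, hC⟩ := hconv C hC
    obtain ⟨hE', hC'⟩ := hconv C' hC'
    beta_reduce
    rw [← hC, ← hC', ← gam_union, ← gam_add, hsat _ (hE.union hE'),
      hsat _ (hE'.add_of_canonicallyOrderedAdd), hsat _ hE, hsat _ hE']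
    exact hadd _ _ hE hE'
  · obtain ⟨hE, hC⟩ := hconv C hC
    beta_reduce
    rw [← hσ _ hE, hC]
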